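/- arXiv:2605.11627 — 9 statements merged into one kernel-verified Lean document; each statement's English description precedes it below -/
import Mathlib

section
/- Let {a_j} be a non-negative, monotonically decreasing real sequence converging to 0, and suppose there exist constants α ∈ (0,1] and β > 0 and an index N such that a_j^α ≤ β (a_j − a_{j+1}) for all j ≥ N. Then {a_j} converges linearly to 0 with rate 1 − 1/β: there exists an index J such that a_{j+1} ≤ (1 − 1/β) a_j for all j ≥ J. -/
open Filter

theorem stmt0 (a : ℕ → ℝ) (ha_nonneg : ∀ j, 0 ≤ a j) (ha_mono : ∀ j, a (j + 1) ≤ a j)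
    (ha_lim : Tendsto a atTop (nhds 0))
    (α β : ℝ) (hα : 0 < α ∧ α ≤ 1) (hβ : 0 < β) (N : ℕ)
    (hrec : ∀ j ≥ N, a j ^ α ≤ β * (a j - a (j + 1))) :
    ∃ J : ℕ, ∀ j ≥ J, a (j + 1) ≤ (1 - 1 / β) * a j := by
  obtain ⟨hα0, hα1⟩ := hα
  have h1 : ∀ᶠ j in atTop, a j < 1 := by
    have := ha_lim (Metric.ball_mem_nhds (0:ℝ) one_pos)
    filter_upwards [this] with j hj
    simp [Real.dist_eq, abs_lt] at hj
    linarith [hj.2]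
  obtain ⟨M, hM⟩ := h1.exists_forall_of_atTop
  refine ⟨max N M, fun j hj => ?_⟩
  have hjN : j ≥ N := le_trans (le_max_left _ _) hj
  have hjM : j ≥ M := le_trans (le_max_right _ _) hj
  have hrec' := hrec j hjN
  have haj : a j ≤ a j ^ α := by
    rcases eq_or_lt_of_le (ha_nonneg j) with h | h
    · rw [← h, Real.zero_rpow (ne_of_gt hα0)]
    · calc a j = a j ^ (1:ℝ) := (Real.rpow_one _).symm
        _ ≤ a j ^ α := Real.rpow_le_rpow_of_exponent_ge h (le_of_lt (hM j hjM)) hα1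
  have key : a j ≤ β * (a j - a (j + 1)) := le_trans haj hrec'
  have hβ' : (0:ℝ) < 1/β := by positivity
  have : a j / β ≤ a j - a (j + 1) := by
    rw [div_le_iff₀ hβ] at *
    nlinarith
  have : a (j+1) ≤ a j - a j / β := by linarith
  calc a (j+1) ≤ a j - a j / β := this
    _ = (1 - 1/β) * a j := by ring
end

section
/- Let {a_j} be a non-negative, monotonically decreasing real sequence converging to 0, and suppose there exist constants α > 1 and β > 0 and an index N such that a_j^α ≤ β (a_j − a_{j+1}) for all j ≥ N. Then there exists a constant C > 0 such that a_j ≤ C · j^{−1/(α−1)} for all sufficiently large j. -/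
open Filter Real

/-- Tangent-line inequality for `t ↦ t ^ (-γ)` on `(0, ∞)`. -/
lemma key_ineq {x y γ : ℝ} (hγ : 0 < γ) (hy : 0 < y) (hxy : y ≤ x) :
    x ^ (-γ) + γ * x ^ (-γ - 1) * (x - y) ≤ y ^ (-γ) := by
  rcases eq_or_lt_of_le hxy with rfl | hlt
  · simp
  have hx : 0 < x := hy.trans hlt
  obtain ⟨c, hc, hslope⟩ := exists_hasDerivAt_eq_slope (fun t => t ^ (-γ))
      (fun t => -γ * t ^ (-γ - 1)) hlt
      (by
        apply ContinuousOn.rpow_const continuousOn_id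
        intro t ht
        exact Or.inl (ne_of_gt (lt_of_lt_of_le hy ht.1)))
      (fun t ht => Real.hasDerivAt_rpow_const (Or.inl (ne_of_gt (hy.trans ht.1))))
  have hc0 : 0 < c := hy.trans hc.1
  -- x ^ (-γ) - y ^ (-γ) = -γ * c ^ (-γ-1) * (x - y)
  have hxmy : 0 < x - y := sub_pos.mpr hlt
  have heq : x ^ (-γ) - y ^ (-γ) = -γ * c ^ (-γ - 1) * (x - y) := by
    field_simp at hslope
    linarith [hslope]
  have hmono : x ^ (-γ - 1) ≤ c ^ (-γ - 1) :=
    Real.rpow_le_rpow_of_nonpos hc0 hc.2.le (by linarith)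
  nlinarith [mul_le_mul_of_nonneg_right hmono hxmy.le]

theorem stmt1 (a : ℕ → ℝ) (ha_nonneg : ∀ j, 0 ≤ a j) (ha_mono : ∀ j, a (j + 1) ≤ a j)
    (ha_lim : Tendsto a atTop (nhds 0))
    (α β : ℝ) (hα : 1 < α) (hβ : 0 < β) (N : ℕ)
    (hrec : ∀ j ≥ N, a j ^ α ≤ β * (a j - a (j + 1))) :
    ∃ C > (0 : ℝ), ∃ J : ℕ, ∀ j ≥ J, a j ≤ C * (j : ℝ) ^ (-(1 / (α - 1))) := by
  have hanti : Antitone a := antitone_nat_of_succ_le ha_mono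
  by_cases hz : ∃ j0, a j0 = 0
  · obtain ⟨j0, hj0⟩ := hz
    refine ⟨1, one_pos, j0, fun j hj => ?_⟩
    have : a j ≤ 0 := hj0 ▸ hanti hj
    have h0 : a j = 0 := le_antisymm this (ha_nonneg j)
    rw [h0, one_mul]
    exact Real.rpow_nonneg (Nat.cast_nonneg j) _
  push_neg at hz
  have hpos : ∀ j, 0 < a j := fun j => (ha_nonneg j).lt_of_ne (Ne.symm (hz j))
  set γ := α - 1 with hγdef
  have hγ : 0 < γ := by simp [hγdef]; linarith
  clear_value γ
  -- the key step: a (j+1) ^ (-γ) ≥ a j ^ (-γ) + γ / β  for j ≥ N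
  have step : ∀ j ≥ N, a j ^ (-γ) + γ / β ≤ a (j + 1) ^ (-γ) := by
    intro j hj
    have h1 := key_ineq hγ (hpos (j + 1)) (ha_mono j)
    have h2 : a j ^ α / β ≤ a j - a (j + 1) := by
      rw [div_le_iff₀ hβ]
      linarith [hrec j hj, mul_comm β (a j - a (j + 1))]
    have hder : 0 < γ * a j ^ (-γ - 1) :=
      mul_pos hγ (Real.rpow_pos_of_pos (hpos j) _)
    have h3 : γ * a j ^ (-γ - 1) * (a j ^ α / β) ≤ γ * a j ^ (-γ - 1) * (a j - a (j + 1)) :=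
      mul_le_mul_of_nonneg_left h2 hder.le
    have h4 : a j ^ (-γ - 1) * a j ^ α = 1 := by
      rw [← Real.rpow_add (hpos j)]
      have : -γ - 1 + α = 0 := by simp [hγdef]
      rw [this, Real.rpow_zero]
    have h5 : γ * a j ^ (-γ - 1) * (a j ^ α / β) = γ / β := by
      calc γ * a j ^ (-γ - 1) * (a j ^ α / β) = a j ^ (-γ - 1) * a j ^ α * (γ / β) := by ring
        _ = γ / β := by rw [h4, one_mul]
    linarith [h1, h3, h5.symm.le]
  -- induction: a (N + k) ^ (-γ) ≥ a N ^ (-γ) + (γ/β) * k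
  have ind : ∀ k : ℕ, a N ^ (-γ) + γ / β * k ≤ a (N + k) ^ (-γ) := by
    intro k
    induction k with
    | zero => simp
    | succ k ih =>
      have := step (N + k) (Nat.le_add_right N k)
      push_cast
      have : a N ^ (-γ) + γ / β * k + γ / β ≤ a (N + k + 1) ^ (-γ) := by linarith
      calc a N ^ (-γ) + γ / β * (k + 1) = a N ^ (-γ) + γ / β * k + γ / β := by ring
        _ ≤ a (N + k + 1) ^ (-γ) := this
        _ = a (N + (k + 1)) ^ (-γ) := by ring_nf
  have haN : 0 < a N ^ (-γ) := Real.rpow_pos_of_pos (hpos N) _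
  set C : ℝ := (γ / (2 * β)) ^ (-(1 / γ)) with hC
  have hCpos : 0 < C := Real.rpow_pos_of_pos (by positivity) _
  refine ⟨C, hCpos, 2 * N + 2, fun j hj => ?_⟩
  have hjN : N ≤ j := by omega
  have hk : j = N + (j - N) := by omega
  have hjhalf : (γ / (2 * β)) * j ≤ γ / β * (j - N : ℕ) := by
    have h1 : (j : ℝ) / 2 ≤ ((j - N : ℕ) : ℝ) := by
      have : (j : ℝ) ≤ 2 * ((j - N : ℕ) : ℝ) := by
        have : j ≤ 2 * (j - N) := by omega
        exact_mod_cast this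
      linarith
    have h2 : 0 < γ / β := div_pos hγ hβ
    calc (γ / (2 * β)) * j = γ / β * ((j : ℝ) / 2) := by ring
      _ ≤ γ / β * ((j - N : ℕ) : ℝ) := mul_le_mul_of_nonneg_left h1 h2.le
  have hlow : (γ / (2 * β)) * j ≤ a j ^ (-γ) := by
    have := ind (j - N)
    rw [← hk] at this
    linarith
  have hMpos : 0 < (γ / (2 * β)) * j := by
    have : (0 : ℝ) < j := by
      have : (2 : ℕ) ≤ j := by omega
      exact_mod_cast Nat.lt_of_lt_of_le (by norm_num) this
    positivity
  -- invert: a j ≤ ((γ/(2β)) * j) ^ (-1/γ)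
  have hinv : a j ≤ ((γ / (2 * β)) * j) ^ (-(1 / γ)) := by
    have hγ0 : γ ≠ 0 := ne_of_gt hγ
    have h1 : (a j ^ (-γ)) ^ (-(1 / γ)) = a j := by
      rw [← Real.rpow_mul (ha_nonneg j)]
      have : -γ * -(1 / γ) = 1 := by field_simp
      rw [this, Real.rpow_one]
    calc a j = (a j ^ (-γ)) ^ (-(1 / γ)) := h1.symm
      _ ≤ ((γ / (2 * β)) * j) ^ (-(1 / γ)) :=
        Real.rpow_le_rpow_of_nonpos hMpos hlow (neg_nonpos.mpr (by positivity))
  have hsplit : ((γ / (2 * β)) * j) ^ (-(1 / γ)) = C * (j : ℝ) ^ (-(1 / γ)) := by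
    rw [Real.mul_rpow (by positivity) (Nat.cast_nonneg j)]
  rw [hγdef] at hinv hsplit ⊢
  linarith [hinv, hsplit.symm.le]
end

section
/- Suppose x̂ ∈ E is a global minimizer of the regularized model q̂ and the predicted reduction vanishes, i.e. q(x̂) = f̄ + φ(x̄). Then x̂ = x̄, and x̄ itself is a global minimizer of q̂; in particular, φ(x̄) ≤ φ(x) + ⟨g, x − x̄⟩ + (1/2)⟨x − x̄, (B + μI)(x − x̄)⟩ for every x ∈ E. -/
open scoped RealInnerProductSpace

theorem stmt4 {E : Type*} [NormedAddCommGroup E] [InnerProductSpace ℝ E]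
    [FiniteDimensional ℝ E]
    (φ : E → EReal) (hφ_bot : ∀ x, φ x ≠ ⊥) (hφ_proper : ∃ x, φ x ≠ ⊤)
    (xb : E) (hxb : φ xb ≠ ⊤) (fb : ℝ) (g : E)
    (B : E →ₗ[ℝ] E) (hB : ∀ u v : E, ⟪B u, v⟫ = ⟪u, B v⟫)
    (μ : ℝ) (hμ : 0 < μ)
    (q qhat : E → EReal)
    (hq : ∀ x, q x = ((fb + ⟪g, x - xb⟫ + (1 / 2) * ⟪x - xb, B (x - xb)⟫ : ℝ) : EReal) + φ x)
    (hqhat : ∀ x, qhat x = q x + (((μ / 2) * ‖x - xb‖ ^ 2 : ℝ) : EReal))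
    (xhat : E) (hmin : ∀ x, qhat xhat ≤ qhat x)
    (hpred : q xhat = (fb : EReal) + φ xb) :
    xhat = xb ∧ (∀ x, qhat xb ≤ qhat x) ∧
      ∀ x : E, φ xb ≤ φ x +
        ((⟪g, x - xb⟫ + (1 / 2) * ⟪x - xb, B (x - xb) + μ • (x - xb)⟫ : ℝ) : EReal) := by
  obtain ⟨a, ha⟩ : ∃ a : ℝ, φ xb = (a : EReal) :=
    ⟨(φ xb).toReal, (EReal.coe_toReal hxb (hφ_bot xb)).symm⟩
  have hqxb : qhat xb = ((fb + a : ℝ) : EReal) := by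
    rw [hqhat, hq, ha, sub_self]
    simp
  have hqxh : qhat xhat = ((fb + a + μ / 2 * ‖xhat - xb‖ ^ 2 : ℝ) : EReal) := by
    rw [hqhat, hpred, ha]
    norm_cast
  have hkey : xhat = xb := by
    have h := hmin xb
    rw [hqxb, hqxh] at h
    rw [EReal.coe_le_coe_iff] at h
    have h2 : ‖xhat - xb‖ ^ 2 = 0 := by nlinarith [sq_nonneg ‖xhat - xb‖]
    have : ‖xhat - xb‖ = 0 := by
      have := sq_eq_zero_iff.mp h2
      exact this
    rwa [norm_eq_zero, sub_eq_zero] at this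
  subst hkey
  refine ⟨rfl, hmin, fun x => ?_⟩
  rcases eq_or_ne (φ x) ⊤ with htop | hne
  · rw [htop, EReal.top_add_coe]
    exact le_top
  · obtain ⟨b, hb⟩ : ∃ b : ℝ, φ x = (b : EReal) :=
      ⟨(φ x).toReal, (EReal.coe_toReal hne (hφ_bot x)).symm⟩
    have h := hmin x
    rw [hqxb, hqhat, hq, hb] at h
    norm_cast at h
    rw [ha, hb]
    norm_cast
    rw [inner_add_right, real_inner_smul_right, real_inner_self_eq_norm_sq]
    linarith
end

section
/- Consider the algorithmic encoding of the regularized proximal quasi-Newton iteration, and assume additionally that F is bounded from below by a real number m. Then the squared step lengths over the successful iterations are summable with ∑_{k ∈ S} ‖x_{k+1} − x_k‖² ≤ (2/(c₁ μ_min)) (F(x₀) − m); in particular, for every ε > 0 the set {k ∈ S : ‖x_{k+1} − x_k‖ ≥ ε} is finite, i.e. the step lengths tend to 0 along the successful iterations. -/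
theorem stmt7 {E : Type*} [NormedAddCommGroup E] [InnerProductSpace ℝ E]
    [FiniteDimensional ℝ E]
    (F : E → EReal) (hF_bot : ∀ v, F v ≠ ⊥)
    (c₁ σ₂ μmin μmax : ℝ) (hc₁ : 0 < c₁ ∧ c₁ < 1) (hσ₂ : 1 < σ₂)
    (hμminmax : 0 < μmin ∧ μmin ≤ μmax)
    (x : ℕ → E) (μ : ℕ → ℝ)
    (hF0 : F (x 0) ≠ ⊤) (hμ0 : μ 0 ∈ Set.Icc μmin μmax)
    (S : Set ℕ)
    (hU : ∀ k ∉ S, x (k + 1) = x k ∧ μ (k + 1) = σ₂ * μ k)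
    (hS : ∀ k ∈ S, μ (k + 1) ∈ Set.Icc μmin μmax ∧ F (x k) ≠ ⊤ ∧
      ∃ p : ℝ, (μ k / 2) * ‖x (k + 1) - x k‖ ^ 2 ≤ p ∧
        F (x (k + 1)) + ((c₁ * p : ℝ) : EReal) ≤ F (x k))
    (m : ℝ) (hm : ∀ v, (m : EReal) ≤ F v) :
    Summable (fun k : S => ‖x ((k : ℕ) + 1) - x (k : ℕ)‖ ^ 2) ∧
    (∑' k : S, ‖x ((k : ℕ) + 1) - x (k : ℕ)‖ ^ 2) ≤
      (2 / (c₁ * μmin)) * ((F (x 0)).toReal - m) ∧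
    (∀ ε > (0 : ℝ), {k ∈ S | ε ≤ ‖x (k + 1) - x k‖}.Finite) := by
  obtain ⟨hc₁0, hc₁1⟩ := hc₁
  obtain ⟨hμmin0, hμmm⟩ := hμminmax
  have hμ : ∀ k, μmin ≤ μ k := by
    intro k
    induction k with
    | zero => exact hμ0.1
    | succ k ih =>
      by_cases hk : k ∈ S
      · exact (hS k hk).1.1
      · rw [(hU k hk).2]; nlinarith
  set h : ℕ → ℝ := fun k => ‖x (k + 1) - x k‖ ^ 2 with hh
  have hh0 : ∀ k, 0 ≤ h k := fun k => sq_nonneg _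
  set g : ℕ → ℝ := S.indicator h with hg
  have hg0 : ∀ k, 0 ≤ g k := fun k => Set.indicator_nonneg (fun k _ => hh0 k) k
  have htop : ∀ k, F (x k) ≠ ⊤ := by
    intro k
    induction k with
    | zero => exact hF0
    | succ k ih =>
      by_cases hk : k ∈ S
      · obtain ⟨_, hFk, p, hp1, hp2⟩ := hS k hk
        intro hT
        rw [hT, EReal.top_add_coe] at hp2
        exact hFk (top_le_iff.mp hp2)
      · rw [(hU k hk).1]; exact ih
  set f : ℕ → ℝ := fun k => (F (x k)).toReal with hf
  have hcoe : ∀ k, F (x k) = ((f k : ℝ) : EReal) :=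
    fun k => (EReal.coe_toReal (htop k) (hF_bot _)).symm
  have hfm : ∀ k, m ≤ f k := by
    intro k
    have := hm (x k)
    rw [hcoe k] at this
    exact_mod_cast this
  have key : ∀ k, f (k + 1) + (c₁ * μmin / 2) * g k ≤ f k := by
    intro k
    by_cases hk : k ∈ S
    · obtain ⟨_, hFk, p, hp1, hp2⟩ := hS k hk
      rw [hcoe k, hcoe (k + 1), ← EReal.coe_add, EReal.coe_le_coe_iff] at hp2
      have hgk : g k = h k := Set.indicator_of_mem hk h
      have hnn : (0:ℝ) ≤ ‖x (k + 1) - x k‖ ^ 2 := sq_nonneg _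
      have hph : μmin / 2 * ‖x (k + 1) - x k‖ ^ 2 ≤ p := by nlinarith [hμ k]
      rw [hgk]
      show f (k + 1) + c₁ * μmin / 2 * ‖x (k + 1) - x k‖ ^ 2 ≤ f k
      nlinarith
    · have hx := (hU k hk).1
      have hgk : g k = 0 := Set.indicator_of_notMem hk h
      rw [hgk]
      simp [hf, hx]
  have hpart : ∀ n, (c₁ * μmin / 2) * ∑ k ∈ Finset.range n, g k ≤ f 0 - f n := by
    intro n
    induction n with
    | zero => simp
    | succ n ih =>
      rw [Finset.sum_range_succ, mul_add]
      have := key n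
      linarith
  have hsum : ∀ n, ∑ k ∈ Finset.range n, g k ≤ (2 / (c₁ * μmin)) * (f 0 - m) := by
    intro n
    have h2 := hpart n
    have h3 := hfm n
    have hcm : 0 < c₁ * μmin := by positivity
    rw [div_mul_eq_mul_div, le_div_iff₀ hcm]
    nlinarith
  have hgsum : Summable g := summable_of_sum_range_le hg0 hsum
  have hsubS : Summable (fun k : S => h (k : ℕ)) :=
    summable_subtype_iff_indicator.mpr hgsum
  refine ⟨hsubS, ?_, ?_⟩
  · have := Summable.tsum_le_of_sum_range_le hgsum hsum
    calc (∑' k : S, h (k : ℕ)) = ∑' k, g k := tsum_subtype S h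
    _ ≤ (2 / (c₁ * μmin)) * (f 0 - m) := this
  · intro ε hε
    have hc := hgsum.tendsto_cofinite_zero
    have hmem : g ⁻¹' Set.Iio (ε ^ 2) ∈ Filter.cofinite :=
      hc (Iio_mem_nhds (by positivity))
    have hfin : (g ⁻¹' Set.Iio (ε ^ 2))ᶜ.Finite := Filter.mem_cofinite.mp hmem
    refine hfin.subset ?_
    intro k hk
    obtain ⟨hkS, hke⟩ := hk
    simp only [Set.mem_compl_iff, Set.mem_preimage, Set.mem_Iio, not_lt]
    rw [hg, Set.indicator_of_mem hkS]
    calc ε ^ 2 ≤ ‖x (k + 1) - x k‖ ^ 2 := by nlinarith [norm_nonneg (x (k+1) - x k)]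
    _ = h k := rfl
end

section
/- Consider the algorithmic encoding of the regularized proximal quasi-Newton iteration, assume F is bounded from below by a real number m, and suppose there exists ω > 0 such that μ_k ‖x_{k+1} − x_k‖ ≥ ω and p_k ≥ (μ_k/2)‖x_{k+1} − x_k‖² for all k ∈ S. Then ∑_{k=0}^{∞} ‖x_{k+1} − x_k‖ ≤ (2/(c₁ ω)) (F(x₀) − m) < ∞; in particular, the sequence {x_k} is a Cauchy sequence and converges. -/
open Filter

theorem stmt8 {E : Type*} [NormedAddCommGroup E] [InnerProductSpace ℝ E]
    [FiniteDimensional ℝ E]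
    (F : E → EReal) (hF_bot : ∀ v, F v ≠ ⊥)
    (c₁ σ₂ μmin μmax : ℝ) (hc₁ : 0 < c₁ ∧ c₁ < 1) (hσ₂ : 1 < σ₂)
    (hμminmax : 0 < μmin ∧ μmin ≤ μmax)
    (x : ℕ → E) (μ : ℕ → ℝ)
    (hF0 : F (x 0) ≠ ⊤) (hμ0 : μ 0 ∈ Set.Icc μmin μmax)
    (S : Set ℕ)
    (hU : ∀ k ∉ S, x (k + 1) = x k ∧ μ (k + 1) = σ₂ * μ k)
    (m : ℝ) (hm : ∀ v, (m : EReal) ≤ F v)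
    (ω : ℝ) (hω : 0 < ω)
    (hS : ∀ k ∈ S, μ (k + 1) ∈ Set.Icc μmin μmax ∧ F (x k) ≠ ⊤ ∧
      ω ≤ μ k * ‖x (k + 1) - x k‖ ∧
      ∃ p : ℝ, (μ k / 2) * ‖x (k + 1) - x k‖ ^ 2 ≤ p ∧
        F (x (k + 1)) + ((c₁ * p : ℝ) : EReal) ≤ F (x k)) :
    Summable (fun k : ℕ => ‖x (k + 1) - x k‖) ∧
    (∑' k : ℕ, ‖x (k + 1) - x k‖) ≤ (2 / (c₁ * ω)) * ((F (x 0)).toReal - m) ∧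
    CauchySeq x ∧ ∃ xstar : E, Tendsto x atTop (nhds xstar) := by
  obtain ⟨hc₁0, hc₁1⟩ := hc₁
  set f : ℕ → ℝ := fun k => (F (x k)).toReal with hf
  -- finiteness along the sequence
  have hfin : ∀ k, F (x k) ≠ ⊤ := by
    intro k
    induction k with
    | zero => exact hF0
    | succ n ih =>
      by_cases hn : n ∈ S
      · obtain ⟨_, hFn, _, p, hp1, hp2⟩ := hS n hn
        intro htop
        rw [htop, EReal.top_add_of_ne_bot (EReal.coe_ne_bot _)] at hp2
        exact hFn (top_le_iff.mp hp2)
      · rw [(hU n hn).1]; exact ih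
  have hcoe : ∀ k, F (x k) = ((f k : ℝ) : EReal) := fun k =>
    (EReal.coe_toReal (hfin k) (hF_bot _)).symm
  have key : ∀ k, (c₁ * ω / 2) * ‖x (k + 1) - x k‖ ≤ f k - f (k + 1) := by
    intro k
    by_cases hk : k ∈ S
    · obtain ⟨_, _, hω', p, hp1, hp2⟩ := hS k hk
      rw [hcoe k, hcoe (k + 1)] at hp2
      rw [← EReal.coe_add, EReal.coe_le_coe_iff] at hp2
      have hnn : (0:ℝ) ≤ ‖x (k + 1) - x k‖ := norm_nonneg _
      have h1 : (ω / 2) * ‖x (k + 1) - x k‖ ≤ (μ k / 2) * ‖x (k + 1) - x k‖ ^ 2 := by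
        have := mul_le_mul_of_nonneg_right hω' hnn
        nlinarith
      nlinarith
    · have he : f (k + 1) = f k := by simp only [hf]; rw [(hU k hk).1]
      rw [(hU k hk).1, he]
      simp
  have hnonneg : ∀ k, (0:ℝ) ≤ ‖x (k + 1) - x k‖ := fun k => norm_nonneg _
  have hmf : ∀ k, m ≤ f k := by
    intro k
    have := hm (x k)
    rw [hcoe k, EReal.coe_le_coe_iff] at this
    exact this
  have hc : 0 < c₁ * ω / 2 := by positivity
  have hsum : ∀ n, ∑ k ∈ Finset.range n, ‖x (k + 1) - x k‖ ≤ (f 0 - m) / (c₁ * ω / 2) := by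
    intro n
    rw [le_div_iff₀ hc]
    have htel : ∑ k ∈ Finset.range n, (f k - f (k + 1)) = f 0 - f n := by
      induction n with
      | zero => simp
      | succ n ih => rw [Finset.sum_range_succ, ih]; ring
    calc (∑ k ∈ Finset.range n, ‖x (k + 1) - x k‖) * (c₁ * ω / 2)
        = ∑ k ∈ Finset.range n, (c₁ * ω / 2) * ‖x (k + 1) - x k‖ := by
          rw [Finset.sum_mul]; congr 1; ext k; ring
      _ ≤ ∑ k ∈ Finset.range n, (f k - f (k + 1)) :=
          Finset.sum_le_sum fun k _ => key k
      _ = f 0 - f n := htel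
      _ ≤ f 0 - m := by linarith [hmf n]
  have hsummable : Summable (fun k : ℕ => ‖x (k + 1) - x k‖) :=
    summable_of_sum_range_le hnonneg hsum
  have hbound : (∑' k : ℕ, ‖x (k + 1) - x k‖) ≤ (2 / (c₁ * ω)) * ((F (x 0)).toReal - m) := by
    have := Summable.tsum_le_of_sum_range_le hsummable hsum
    have heq : (f 0 - m) / (c₁ * ω / 2) = (2 / (c₁ * ω)) * ((F (x 0)).toReal - m) := by
      rw [hf]
      field_simp
    linarith [heq ▸ this]
  have hcauchy : CauchySeq x := by
    apply cauchySeq_of_summable_dist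
    convert hsummable using 2 with n
    rw [dist_eq_norm]
    exact norm_sub_rev _ _
  exact ⟨hsummable, hbound, hcauchy, cauchySeq_tendsto_of_complete hcauchy⟩
end

section
/- Let φ : E → ℝ ∪ {+∞} be proper and lower semicontinuous, let γ > 0 be such that the Moreau envelope value e_φ^γ(x̄) := inf_y { φ(y) + (1/(2γ))‖y − x̄‖² } is finite at the point x̄ ∈ E, and suppose μ > 1/γ + ‖B‖_op. Then the regularized model q̂(x) := f̄ + ⟨g, x − x̄⟩ + (1/2)⟨x − x̄, B(x − x̄)⟩ + (μ/2)‖x − x̄‖² + φ(x) attains its infimum: there exists x̂ ∈ E with q̂(x̂) ≤ q̂(x) for all x ∈ E (and q̂(x̂) < ∞). -/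
open scoped RealInnerProductSpace

open Set Metric in
/-- A lower semicontinuous `EReal`-valued function attains its minimum on a
nonempty compact set. -/
lemma lsc_exists_min_on_compact {α : Type*} [TopologicalSpace α] [T2Space α]
    {f : α → EReal} (hf : LowerSemicontinuous f) {s : Set α}
    (hs : IsCompact s) (hne : s.Nonempty) :
    ∃ x ∈ s, ∀ y ∈ s, f x ≤ f y := by
  set m : EReal := ⨅ y : s, f (y : α) with hm
  rcases eq_or_lt_of_le (le_top : m ≤ ⊤) with hmt | hmt
  · obtain ⟨x, hx⟩ := hne
    refine ⟨x, hx, fun y hy => ?_⟩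
    have h1 : m ≤ f y := iInf_le (fun z : s => f (z : α)) ⟨y, hy⟩
    rw [hmt] at h1
    rw [top_le_iff.mp h1]
    exact le_top
  · have hι : Nonempty {a : EReal // m < a} := ⟨⟨⊤, hmt⟩⟩
    set Z : {a : EReal // m < a} → Set α := fun a => s ∩ f ⁻¹' Iic (a : EReal) with hZ
    have hZd : Directed (· ⊇ ·) Z := by
      intro a b
      refine ⟨⟨min (a : EReal) (b : EReal), lt_min a.2 b.2⟩, ?_, ?_⟩
      · intro x hx
        have hx2 : f x ≤ min (a : EReal) (b : EReal) := hx.2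
        exact ⟨hx.1, show f x ≤ (a : EReal) from le_trans hx2 (min_le_left _ _)⟩
      · intro x hx
        have hx2 : f x ≤ min (a : EReal) (b : EReal) := hx.2
        exact ⟨hx.1, show f x ≤ (b : EReal) from le_trans hx2 (min_le_right _ _)⟩
    have hZn : ∀ a, (Z a).Nonempty := by
      rintro ⟨a, ha⟩
      have : ∃ y : s, f (y : α) < a := by
        by_contra h
        push_neg at h
        exact absurd (le_iInf h) (not_le.mpr ha)
      obtain ⟨⟨y, hy⟩, hya⟩ := this
      exact ⟨y, hy, le_of_lt hya⟩
    have hZc : ∀ a, IsCompact (Z a) := fun a =>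
      hs.inter_right (hf.isClosed_preimage _)
    have hZcl : ∀ a, IsClosed (Z a) := fun a =>
      hs.isClosed.inter (hf.isClosed_preimage _)
    obtain ⟨x, hx⟩ := IsCompact.nonempty_iInter_of_directed_nonempty_isCompact_isClosed
      Z hZd hZn hZc hZcl
    simp only [Set.mem_iInter] at hx
    have hxs : x ∈ s := (hx ⟨⊤, hmt⟩).1
    refine ⟨x, hxs, fun y hy => ?_⟩
    have hxm : f x ≤ m := by
      refine le_of_forall_gt_imp_ge_of_dense fun a ha => ?_
      exact (hx ⟨a, ha⟩).2
    exact hxm.trans (iInf_le (fun z : s => f (z : α)) ⟨y, hy⟩)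

theorem stmt10 {E : Type*} [NormedAddCommGroup E] [InnerProductSpace ℝ E]
    [FiniteDimensional ℝ E]
    (φ : E → EReal) (hφ_bot : ∀ x, φ x ≠ ⊥) (hφ_proper : ∃ x, φ x ≠ ⊤)
    (hφ_lsc : LowerSemicontinuous φ)
    (xb : E) (fb : ℝ) (g : E)
    (B : E →L[ℝ] E) (hB : ∀ u v : E, ⟪B u, v⟫ = ⟪u, B v⟫)
    (μ : ℝ) (γ : ℝ) (hγ : 0 < γ)
    (e : EReal)
    (he : e = ⨅ y : E, φ y + (((1 / (2 * γ)) * ‖y - xb‖ ^ 2 : ℝ) : EReal))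
    (he_fin : e ≠ ⊥)
    (hμ : 1 / γ + ‖B‖ < μ)
    (qhat : E → EReal)
    (hqhat : ∀ x, qhat x = ((fb + ⟪g, x - xb⟫ + (1 / 2) * ⟪x - xb, B (x - xb)⟫
        + (μ / 2) * ‖x - xb‖ ^ 2 : ℝ) : EReal) + φ x) :
    ∃ xhat : E, (∀ x : E, qhat xhat ≤ qhat x) ∧ qhat xhat ≠ ⊤ := by
  classical
  obtain ⟨x₀, hx₀⟩ := hφ_proper
  -- e is finite
  have he_top : e ≠ ⊤ := by
    rw [he]
    intro h
    have h1 : (⨅ y : E, φ y + (((1 / (2 * γ)) * ‖y - xb‖ ^ 2 : ℝ) : EReal))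
        ≤ φ x₀ + (((1 / (2 * γ)) * ‖x₀ - xb‖ ^ 2 : ℝ) : EReal) := iInf_le _ x₀
    rw [h] at h1
    have h2 : φ x₀ + (((1 / (2 * γ)) * ‖x₀ - xb‖ ^ 2 : ℝ) : EReal) < ⊤ :=
      EReal.add_lt_top (lt_top_iff_ne_top.mpr hx₀).ne (EReal.coe_ne_top _)
    exact absurd (top_le_iff.mp h1) h2.ne
  set e' : ℝ := e.toReal with he'
  have hee : (e' : EReal) = e := EReal.coe_toReal he_top he_fin
  -- lower bound for φ
  have hφ_lb : ∀ y : E, ((e' - (1 / (2 * γ)) * ‖y - xb‖ ^ 2 : ℝ) : EReal) ≤ φ y := by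
    intro y
    have h1 : e ≤ φ y + (((1 / (2 * γ)) * ‖y - xb‖ ^ 2 : ℝ) : EReal) := by
      rw [he]; exact iInf_le _ y
    rcases eq_or_ne (φ y) ⊤ with hy | hy
    · rw [hy]; exact le_top
    · have hr : ((φ y).toReal : EReal) = φ y := EReal.coe_toReal hy (hφ_bot y)
      rw [← hee] at h1
      rw [← hr] at h1 ⊢
      rw [← EReal.coe_add, EReal.coe_le_coe_iff] at h1
      rw [EReal.coe_le_coe_iff]
      linarith
  -- the continuous quadratic part
  set Q : E → ℝ := fun x => fb + ⟪g, x - xb⟫ + (1 / 2) * ⟪x - xb, B (x - xb)⟫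
      + (μ / 2) * ‖x - xb‖ ^ 2 with hQ
  have hQcont : Continuous Q := by
    apply Continuous.add
    apply Continuous.add
    apply Continuous.add continuous_const
    · exact (continuous_const.inner (continuous_id.sub continuous_const))
    · exact continuous_const.mul
        ((continuous_id.sub continuous_const).inner
          (B.continuous.comp (continuous_id.sub continuous_const)))
    · exact continuous_const.mul
        (((continuous_id.sub continuous_const).norm).pow 2)
  -- lower bound for Q
  set α : ℝ := (μ - ‖B‖ - 1 / γ) / 2 with hα
  have hα_pos : 0 < α := by
    rw [hα]; linarith
  have hQ_lb : ∀ x : E, fb - ‖g‖ * ‖x - xb‖ + ((μ - ‖B‖) / 2) * ‖x - xb‖ ^ 2 ≤ Q x := by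
    intro x
    set v : E := x - xb with hv
    have h1 : -(‖g‖ * ‖v‖) ≤ ⟪g, v⟫ := by
      have := abs_real_inner_le_norm g v
      cases abs_le.mp this with
      | intro hl hr => exact hl
    have h2 : -(‖B‖ * ‖v‖ ^ 2) ≤ ⟪v, B v⟫ := by
      have hb := abs_real_inner_le_norm v (B v)
      have hb2 : ‖B v‖ ≤ ‖B‖ * ‖v‖ := B.le_opNorm v
      have : |⟪v, B v⟫| ≤ ‖B‖ * ‖v‖ ^ 2 := by
        calc |⟪v, B v⟫| ≤ ‖v‖ * ‖B v‖ := hb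
        _ ≤ ‖v‖ * (‖B‖ * ‖v‖) := by
            apply mul_le_mul_of_nonneg_left hb2 (norm_nonneg _)
        _ = ‖B‖ * ‖v‖ ^ 2 := by ring
      linarith [(abs_le.mp this).1]
    simp only [hQ]
    nlinarith
  -- overall coercive lower bound
  have hq_lb : ∀ x : E,
      ((fb + e' - ‖g‖ * ‖x - xb‖ + α * ‖x - xb‖ ^ 2 : ℝ) : EReal) ≤ qhat x := by
    intro x
    rw [hqhat x]
    rcases eq_or_ne (φ x) ⊤ with hx | hx
    · rw [hx, EReal.add_top_of_ne_bot (EReal.coe_ne_bot _)]; exact le_top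
    · have hr : ((φ x).toReal : EReal) = φ x := EReal.coe_toReal hx (hφ_bot x)
      have h1 := hφ_lb x
      rw [← hr, EReal.coe_le_coe_iff] at h1
      have h2 := hQ_lb x
      rw [← hr, ← EReal.coe_add, EReal.coe_le_coe_iff]
      have h3 : α * ‖x - xb‖ ^ 2
          = ((μ - ‖B‖) / 2) * ‖x - xb‖ ^ 2 - (1 / (2 * γ)) * ‖x - xb‖ ^ 2 := by
        have hg : (1 : ℝ) / (2 * γ) = (1 / γ) / 2 := by
          field_simp
        rw [hα, hg]; ring
      simp only [hQ] at h2
      linarith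
  -- the reference value at x₀
  set p : ℝ := (φ x₀).toReal with hp
  have hpr : ((p : ℝ) : EReal) = φ x₀ := EReal.coe_toReal hx₀ (hφ_bot x₀)
  set c0 : ℝ := Q x₀ + p with hc0
  have hq0 : qhat x₀ = (c0 : EReal) := by
    rw [hqhat x₀, ← hpr, ← EReal.coe_add]
  -- radius
  set R : ℝ := max (‖x₀ - xb‖) (max ((‖g‖ + 1) / α) (|c0 - fb - e'|)) with hR
  -- outside the ball, qhat is > c0
  have hout : ∀ x : E, R < ‖x - xb‖ → (c0 : EReal) < qhat x := by
    intro x hx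
    set d : ℝ := ‖x - xb‖ with hd
    have h1 : (‖g‖ + 1) / α < d := lt_of_le_of_lt (le_trans (le_max_left _ _) (le_max_right _ _)) hx
    have h2 : |c0 - fb - e'| < d := lt_of_le_of_lt (le_trans (le_max_right _ _) (le_max_right _ _)) hx
    have hdpos : 0 < d := lt_of_le_of_lt (abs_nonneg _) h2
    have h3 : ‖g‖ + 1 < α * d := by
      rw [div_lt_iff₀ hα_pos] at h1; linarith [h1]
    have h4 : c0 < fb + e' - ‖g‖ * d + α * d ^ 2 := by
      have h5 : d < α * d ^ 2 - ‖g‖ * d := by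
        have : d * (‖g‖ + 1) < d * (α * d) := by
          apply mul_lt_mul_of_pos_left h3 hdpos
        nlinarith
      have h6 : c0 - fb - e' < d := lt_of_le_of_lt (le_abs_self _) h2
      nlinarith
    calc (c0 : EReal) < ((fb + e' - ‖g‖ * d + α * d ^ 2 : ℝ) : EReal) :=
          EReal.coe_lt_coe_iff.mpr h4
      _ ≤ qhat x := hq_lb x
  -- the closed ball
  set s : Set E := Metric.closedBall xb R with hs
  have hsc : IsCompact s := isCompact_closedBall xb R
  have hx₀s : x₀ ∈ s := by
    rw [hs, Metric.mem_closedBall, dist_eq_norm]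
    exact le_max_left _ _
  have hsne : s.Nonempty := ⟨x₀, hx₀s⟩
  -- qhat is lower semicontinuous
  have hq_lsc : LowerSemicontinuous qhat := by
    have h1 : LowerSemicontinuous (fun x => ((Q x : ℝ) : EReal) + φ x) := by
      apply LowerSemicontinuous.add'
      · exact (continuous_coe_real_ereal.comp hQcont).lowerSemicontinuous
      · exact hφ_lsc
      · intro x
        exact EReal.continuousAt_add (Or.inl (EReal.coe_ne_top _))
          (Or.inl (EReal.coe_ne_bot _))
    have : qhat = fun x => ((Q x : ℝ) : EReal) + φ x := funext fun x => hqhat x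
    rw [this]
    exact h1
  obtain ⟨xhat, hxs, hxmin⟩ := lsc_exists_min_on_compact hq_lsc hsc hsne
  have hle0 : qhat xhat ≤ (c0 : EReal) := hq0 ▸ hxmin x₀ hx₀s
  refine ⟨xhat, fun x => ?_, ?_⟩
  · by_cases hx : x ∈ s
    · exact hxmin x hx
    · have : R < ‖x - xb‖ := by
        rw [hs, Metric.mem_closedBall, dist_eq_norm, not_le] at hx
        exact hx
      exact hle0.trans (hout x this).le
  · exact fun h => absurd (h ▸ hle0) (not_le.mpr (EReal.coe_lt_top _))
end

section
/- Suppose additionally that f : E → ℝ is differentiable on an open convex set U containing x̄, that its gradient satisfies ‖∇f(u) − ∇f(v)‖ ≤ L‖u − v‖ for all u, v ∈ U and some L ≥ 0, that f̄ = f(x̄) and g = ∇f(x̄), and let x̂ ∈ U be a global minimizer of the regularized model q̂. Then, with F := f + φ, ared := F(x̄) − F(x̂), and pred := F(x̄) − q(x̂) (both finite real numbers), one has pred − ared ≤ (L + ‖B‖_op/2)‖x̂ − x̄‖², and consequently, for every c₁ ∈ (0,1), ared − c₁·pred ≥ (1/2)((1 − c₁)μ − 2L − ‖B‖_op)‖x̂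 − x̄‖². -/
open scoped RealInnerProductSpace
open InnerProductSpace

/-!
Comparing `x̂` with `x̄` in the minimality of `q̂` gives `q̂ x̂ ≤ q̂ x̄ = F x̄`, so `φ x̂` is finite and
`pred ≥ (μ/2)‖x̂ - x̄‖²`. Next, `pred - ared = (f x̂ - f x̄ - ⟪∇f x̄, x̂ - x̄⟫) - ½⟪x̂ - x̄, B (x̂ - x̄)⟫`;
along the segment `[x̄, x̂] ⊆ U` the gradient stays within `L‖x̂ - x̄‖` of `∇f x̄`, so the mean value
inequality bounds the first term by `L‖x̂ - x̄‖²`, and the second is at most `‖B‖‖x̂ - x̄‖²/2`.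
Finally `ared - c₁ pred = (1 - c₁) pred - (pred - ared)`.
-/

theorem abs_sub_sub_inner_le_of_lipschitzOn_gradient {E : Type*} [NormedAddCommGroup E]
    [InnerProductSpace ℝ E] [CompleteSpace E] {f : E → ℝ} {f' : E → E} {U : Set E} {L : ℝ}
    (hU : Convex ℝ U) (hf : ∀ u ∈ U, HasGradientAt f (f' u) u) (hL : 0 ≤ L)
    (hLip : ∀ u ∈ U, ∀ v ∈ U, ‖f' u - f' v‖ ≤ L * ‖u - v‖) {x y : E} (hx : x ∈ U) (hy : y ∈ U) :
    |f y - f x - ⟪f' x, y - x⟫| ≤ L * ‖y - x‖ ^ 2 := by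
  have hseg : segment ℝ x y ⊆ U := hU.segment_subset hx hy
  have hderiv : ∀ z ∈ segment ℝ x y,
      HasFDerivWithinAt f (toDual ℝ E (f' z) : E →L[ℝ] ℝ) (segment ℝ x y) z :=
    fun z hz => (hf z (hseg hz)).hasFDerivAt.hasFDerivWithinAt
  have hbound : ∀ z ∈ segment ℝ x y,
      ‖(toDual ℝ E (f' z) : E →L[ℝ] ℝ) - toDual ℝ E (f' x)‖ ≤ L * ‖y - x‖ := by
    intro z hz
    rw [← map_sub, LinearIsometryEquiv.norm_map]
    calc ‖f' z - f' x‖ ≤ L * ‖z - x‖ := hLip z (hseg hz) x hx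
      _ ≤ L * ‖y - x‖ := mul_le_mul_of_nonneg_left (norm_sub_le_of_mem_segment hz) hL
  have := (convex_segment x y).norm_image_sub_le_of_norm_hasFDerivWithin_le' hderiv hbound
    (left_mem_segment ℝ x y) (right_mem_segment ℝ x y)
  rwa [Real.norm_eq_abs, toDual_apply_apply, mul_assoc, ← sq] at this

theorem abs_inner_self_apply_le {E : Type*} [NormedAddCommGroup E] [InnerProductSpace ℝ E]
    (B : E →L[ℝ] E) (v : E) : |⟪v, B v⟫| ≤ ‖B‖ * ‖v‖ ^ 2 :=
  calc |⟪v, B v⟫| ≤ ‖v‖ * ‖B v‖ := abs_real_inner_le_norm _ _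
    _ ≤ ‖v‖ * (‖B‖ * ‖v‖) := mul_le_mul_of_nonneg_left (B.le_opNorm v) (norm_nonneg v)
    _ = ‖B‖ * ‖v‖ ^ 2 := by ring

namespace EReal

theorem ne_top_of_coe_add_add_coe_le_coe {x : EReal} {a b c : ℝ}
    (h : (a : EReal) + x + b ≤ c) : x ≠ ⊤ := by
  rintro rfl
  simp only [coe_add_top, top_add_coe, top_le_iff, coe_ne_top] at h

theorem add_toReal_add_le_of_coe_add_add_coe_le_coe {x : EReal} {a b c : ℝ} (hx : x ≠ ⊥)
    (h : (a : EReal) + x + b ≤ c) : a + x.toReal + b ≤ c := by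
  lift x to ℝ using ⟨ne_top_of_coe_add_add_coe_le_coe h, hx⟩
  exact_mod_cast h

end EReal

theorem stmt11_general {E : Type*} [NormedAddCommGroup E] [InnerProductSpace ℝ E]
    [FiniteDimensional ℝ E]
    (φ : E → EReal) (hφ_bot : ∀ x, φ x ≠ ⊥)
    (xb : E) (hxb : φ xb ≠ ⊤) (fb : ℝ) (g : E)
    (B : E →L[ℝ] E)
    (μ : ℝ)
    (q qhat : E → EReal)
    (hq : ∀ x, q x = ((fb + ⟪g, x - xb⟫ + (1 / 2) * ⟪x - xb, B (x - xb)⟫ : ℝ) : EReal) + φ x)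
    (hqhat : ∀ x, qhat x = q x + (((μ / 2) * ‖x - xb‖ ^ 2 : ℝ) : EReal))
    (f : E → ℝ) (f' : E → E) (U : Set E) (hU_conv : Convex ℝ U)
    (hxbU : xb ∈ U)
    (hdiff : ∀ u ∈ U, HasGradientAt f (f' u) u)
    (L : ℝ) (hL : 0 ≤ L)
    (hLip : ∀ u ∈ U, ∀ v ∈ U, ‖f' u - f' v‖ ≤ L * ‖u - v‖)
    (hfb : fb = f xb) (hg : g = f' xb)
    (xhat : E) (hxhatU : xhat ∈ U) (hmin : ∀ x, qhat xhat ≤ qhat x) :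
    φ xhat ≠ ⊤ ∧
    ∀ ared pred : ℝ,
      ared = (f xb + (φ xb).toReal) - (f xhat + (φ xhat).toReal) →
      pred = (f xb + (φ xb).toReal) -
        (fb + ⟪g, xhat - xb⟫ + (1 / 2) * ⟪xhat - xb, B (xhat - xb)⟫ + (φ xhat).toReal) →
      pred - ared ≤ (L + ‖B‖ / 2) * ‖xhat - xb‖ ^ 2 ∧
      ∀ c₁ ∈ Set.Ioo (0 : ℝ) 1,
        (1 / 2) * ((1 - c₁) * μ - 2 * L - ‖B‖) * ‖xhat - xb‖ ^ 2 ≤ ared - c₁ * pred := by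
  have hqhat_xb : qhat xb = ((fb + (φ xb).toReal : ℝ) : EReal) := by
    rw [hqhat, hq, ← EReal.coe_toReal hxb (hφ_bot xb)]
    simp [← EReal.coe_add]
  have hdecrease := hmin xb
  rw [hqhat_xb, hqhat, hq] at hdecrease
  refine ⟨EReal.ne_top_of_coe_add_add_coe_le_coe hdecrease, fun ared pred hared hpred => ?_⟩
  have hpred_ge : μ / 2 * ‖xhat - xb‖ ^ 2 ≤ pred := by
    have hmodel := EReal.add_toReal_add_le_of_coe_add_add_coe_le_coe (hφ_bot xhat) hdecrease
    linarith
  have hgap : pred - ared ≤ (L + ‖B‖ / 2) * ‖xhat - xb‖ ^ 2 := by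
    have hf := abs_le.1 (abs_sub_sub_inner_le_of_lipschitzOn_gradient hU_conv hdiff hL hLip
      hxbU hxhatU)
    have hB := abs_le.1 (abs_inner_self_apply_le B (xhat - xb))
    subst hared hpred hfb hg
    linarith [hf.2, hB.1]
  refine ⟨hgap, fun c₁ hc₁ => ?_⟩
  have hscaled := mul_le_mul_of_nonneg_left hpred_ge (sub_nonneg.2 hc₁.2.le)
  linarith

theorem stmt11 {E : Type*} [NormedAddCommGroup E] [InnerProductSpace ℝ E]
    [FiniteDimensional ℝ E]
    (φ : E → EReal) (hφ_bot : ∀ x, φ x ≠ ⊥) (hφ_proper : ∃ x, φ x ≠ ⊤)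
    (xb : E) (hxb : φ xb ≠ ⊤) (fb : ℝ) (g : E)
    (B : E →L[ℝ] E) (hB : ∀ u v : E, ⟪B u, v⟫ = ⟪u, B v⟫)
    (μ : ℝ) (hμ : 0 < μ)
    (q qhat : E → EReal)
    (hq : ∀ x, q x = ((fb + ⟪g, x - xb⟫ + (1 / 2) * ⟪x - xb, B (x - xb)⟫ : ℝ) : EReal) + φ x)
    (hqhat : ∀ x, qhat x = q x + (((μ / 2) * ‖x - xb‖ ^ 2 : ℝ) : EReal))
    (f : E → ℝ) (f' : E → E) (U : Set E) (hU_open : IsOpen U) (hU_conv : Convex ℝ U)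
    (hxbU : xb ∈ U)
    (hdiff : ∀ u ∈ U, HasGradientAt f (f' u) u)
    (L : ℝ) (hL : 0 ≤ L)
    (hLip : ∀ u ∈ U, ∀ v ∈ U, ‖f' u - f' v‖ ≤ L * ‖u - v‖)
    (hfb : fb = f xb) (hg : g = f' xb)
    (xhat : E) (hxhatU : xhat ∈ U) (hmin : ∀ x, qhat xhat ≤ qhat x) :
    φ xhat ≠ ⊤ ∧
    ∀ ared pred : ℝ,
      ared = (f xb + (φ xb).toReal) - (f xhat + (φ xhat).toReal) →
      pred = (f xb + (φ xb).toReal) -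
        (fb + ⟪g, xhat - xb⟫ + (1 / 2) * ⟪xhat - xb, B (xhat - xb)⟫ + (φ xhat).toReal) →
      pred - ared ≤ (L + ‖B‖ / 2) * ‖xhat - xb‖ ^ 2 ∧
      ∀ c₁ ∈ Set.Ioo (0 : ℝ) 1,
        (1 / 2) * ((1 - c₁) * μ - 2 * L - ‖B‖) * ‖xhat - xb‖ ^ 2 ≤ ared - c₁ * pred :=
  stmt11_general φ hφ_bot xb hxb fb g B μ q qhat hq hqhat f f' U hU_conv hxbU hdiff L hL hLip hfb hg
    xhat hxhatU hmin
end

section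
/- Let H be a symmetric positive definite n×n real matrix, let d, y ∈ ℝⁿ satisfy ⟨y, d⟩ > 0, and let γ be a real number with 0 < γ < ⟨y, d⟩ / ⟨d, H d⟩. Then ⟨y − γ H d, d⟩ > 0, and the Kleinmichel update H⁺ := γ [ H + ((y − γ H d)(y − γ H d)ᵀ) / (γ ⟨y − γ H d, d⟩) ] is symmetric positive definite. -/
/-! The choice of `γ` is exactly the condition `γ ⟨d, H d⟩ < ⟨y, d⟩`, i.e. `⟨y - γ H d, d⟩ > 0`.
Then `H⁺` is a positive multiple of the positive definite `H` plus a nonnegative multiple of the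
positive semidefinite rank-one matrix `w wᵀ`, hence positive definite. -/

open Matrix

lemma sub_smul_mulVec_dotProduct {ι R : Type*} [Fintype ι] [CommRing R] (A : Matrix ι ι R)
    (d y : ι → R) (γ : R) : (y - γ • (A *ᵥ d)) ⬝ᵥ d = y ⬝ᵥ d - γ * (d ⬝ᵥ A *ᵥ d) := by
  rw [sub_dotProduct, smul_dotProduct, dotProduct_comm (A *ᵥ d), smul_eq_mul]

lemma Matrix.PosDef.add_smul_vecMulVec_self {ι : Type*} [Fintype ι] {H : Matrix ι ι ℝ}
    (hH : H.PosDef) (w : ι → ℝ) {c : ℝ} (hc : 0 ≤ c) : (H + c • vecMulVec w w).PosDef := by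
  simpa using hH.add_posSemidef ((posSemidef_vecMulVec_self_star w).smul hc)

theorem stmt12 {n : ℕ} (H : Matrix (Fin n) (Fin n) ℝ) (hH : H.PosDef)
    (d y : Fin n → ℝ) (hyd : 0 < y ⬝ᵥ d)
    (γ : ℝ) (hγ : 0 < γ) (hγ' : γ < (y ⬝ᵥ d) / (d ⬝ᵥ (H *ᵥ d))) :
    0 < (y - γ • (H *ᵥ d)) ⬝ᵥ d ∧
    (γ • (H + (γ * ((y - γ • (H *ᵥ d)) ⬝ᵥ d))⁻¹ •
        vecMulVec (y - γ • (H *ᵥ d)) (y - γ • (H *ᵥ d)))).PosDef := by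
  have hd : d ≠ 0 := by
    rintro rfl
    simp at hyd
  have hdHd : 0 < d ⬝ᵥ H *ᵥ d := by simpa using hH.dotProduct_mulVec_pos hd
  have hcurv : 0 < (y - γ • (H *ᵥ d)) ⬝ᵥ d := by
    rw [sub_smul_mulVec_dotProduct, sub_pos]
    exact (lt_div_iff₀ hdHd).mp hγ'
  exact ⟨hcurv, (hH.add_smul_vecMulVec_self _ (by positivity)).smul hγ⟩
end

section
/- Let H₀ be a symmetric n×n real matrix, let γ̄ > 0 and γ > 0, let Q be an n×s real matrix, and let M be a symmetric invertible s×s real matrix; set H := γ̄ H₀ + Q M⁻¹ Qᵀ. Let d, y ∈ ℝⁿ, define q := y − γ γ̄ H₀ d and δ := ⟨q, d⟩ − γ (Qᵀ d)ᵀ M⁻¹ (Qᵀ d), and assume δ ≠ 0. Then ⟨y − γ H d, d⟩ = δ ≠ 0, the (s+1)×(s+1) block matrix M₊ := [[γ⁻¹ M, Qᵀ d], [(Qᵀ d)ᵀ, ⟨q, d⟩]] is invertible, and the Kleinmichel update H⁺ := γ [ H + ((y − γ H d)(y − γ H d)ᵀ) / (γ ⟨y − γ H d, d⟩) ] satisfies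 the compact representation H⁺ = γ γ̄ H₀ + [Q q] M₊⁻¹ [Q q]ᵀ, where [Q q] is the n×(s+1) matrix obtained by appending the column q to Q. -/
/-! The Kleinmichel update adds to `γ H` the rank-one term `δ⁻¹ w wᵀ`, where
`w := y - γ H d = q - γ Q M⁻¹ Qᵀ d` and `⟨w, d⟩ = δ`. Block elimination of `M₊` through its Schur
complement `⟨q, d⟩ - (Qᵀ d)ᵀ (γ⁻¹ M)⁻¹ (Qᵀ d) = δ` gives
`[Q q] M₊⁻¹ [Q q]ᵀ = Q (γ⁻¹ M)⁻¹ Qᵀ + δ⁻¹ w' w'ᵀ` with `w' = q - Q (γ⁻¹ M)⁻¹ Qᵀ d = w`. -/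

open Matrix

namespace Matrix

variable {l m n k α : Type*} [Fintype m]

section CommRing

variable [CommRing α]

theorem of_const_sub_replicateRow_mul_mul_replicateCol (A : Matrix m m α) (b : m → α) (c : α) :
    (of fun _ _ => c : Matrix Unit Unit α) - replicateRow Unit b * A * replicateCol Unit b =
      of fun _ _ => c - b ⬝ᵥ (A *ᵥ b) := by
  rw [Matrix.mul_assoc, ← replicateCol_mulVec, replicateRow_mul_replicateCol]
  rfl

variable [Fintype n] [DecidableEq m] [DecidableEq n]

theorem fromCols_mul_inv_fromBlocks_mul_fromRows {A : Matrix m m α} {B : Matrix m n α}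
    {C : Matrix n m α} {D : Matrix n n α} (hA : IsUnit A) (hS : IsUnit (D - C * A⁻¹ * B))
    (P : Matrix l m α) (R : Matrix l n α) (X : Matrix m k α) (Y : Matrix n k α) :
    fromCols P R * (fromBlocks A B C D)⁻¹ * fromRows X Y =
      P * A⁻¹ * X + (R - P * A⁻¹ * B) * (D - C * A⁻¹ * B)⁻¹ * (Y - C * A⁻¹ * X) := by
  let := hA.invertible
  rw [← invOf_eq_nonsing_inv] at hS
  let := hS.invertible
  let := fromBlocks₁₁Invertible A B C D
  rw [← invOf_eq_nonsing_inv, invOf_fromBlocks₁₁_eq, ← invOf_eq_nonsing_inv A,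
    ← invOf_eq_nonsing_inv (D - C * ⅟A * B), fromCols_mul_fromBlocks, fromCols_mul_fromRows]
  simp only [Matrix.mul_add, Matrix.add_mul, Matrix.mul_sub, Matrix.sub_mul, Matrix.mul_neg,
    Matrix.neg_mul, Matrix.mul_assoc]
  abel

theorem isUnit_fromBlocks_of_isUnit_schur {A : Matrix m m α} {B : Matrix m n α}
    {C : Matrix n m α} {D : Matrix n n α} (hA : IsUnit A) (hS : IsUnit (D - C * A⁻¹ * B)) :
    IsUnit (fromBlocks A B C D) := by
  let := hA.invertible
  rw [← invOf_eq_nonsing_inv] at hS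
  exact isUnit_fromBlocks_iff_of_invertible₁₁.mpr hS

end CommRing

section Field

variable [Field α]

theorem isUnit_of_const_iff {c : α} : IsUnit (of fun _ _ => c : Matrix Unit Unit α) ↔ c ≠ 0 := by
  rw [isUnit_iff_isUnit_det, det_unique, isUnit_iff_ne_zero]
  rfl

theorem inv_of_const (c : α) : (of fun _ _ => c : Matrix Unit Unit α)⁻¹ = of fun _ _ => c⁻¹ := by
  rw [inv_subsingleton]
  ext
  simp [Ring.inverse_eq_inv']

variable [DecidableEq m] {A : Matrix m m α} {b : m → α} {c : α}

theorem isUnit_fromBlocks_replicateCol_replicateRow (hA : IsUnit A)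
    (hσ : c - b ⬝ᵥ (A⁻¹ *ᵥ b) ≠ 0) :
    IsUnit (fromBlocks A (replicateCol Unit b) (replicateRow Unit b) (of fun _ _ => c)) := by
  refine isUnit_fromBlocks_of_isUnit_schur hA ?_
  rwa [of_const_sub_replicateRow_mul_mul_replicateCol, isUnit_of_const_iff]

theorem fromCols_replicateCol_mul_inv_fromBlocks_mul_transpose (hA : IsUnit A) (hAs : A.IsSymm)
    (hσ : c - b ⬝ᵥ (A⁻¹ *ᵥ b) ≠ 0) (P : Matrix l m α) (r : l → α) :
    fromCols P (replicateCol Unit r) *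
        (fromBlocks A (replicateCol Unit b) (replicateRow Unit b) (of fun _ _ => c))⁻¹ *
        (fromCols P (replicateCol Unit r))ᵀ =
      P * A⁻¹ * Pᵀ + (c - b ⬝ᵥ (A⁻¹ *ᵥ b))⁻¹ •
        vecMulVec (r - P *ᵥ (A⁻¹ *ᵥ b)) (r - P *ᵥ (A⁻¹ *ᵥ b)) := by
  have hS := of_const_sub_replicateRow_mul_mul_replicateCol A⁻¹ b c
  rw [transpose_fromCols, transpose_replicateCol,
    fromCols_mul_inv_fromBlocks_mul_fromRows hA (by rwa [hS, isUnit_of_const_iff]), hS,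
    inv_of_const]
  have hrow : replicateRow Unit r - replicateRow Unit b * A⁻¹ * Pᵀ =
      replicateRow Unit (r - P *ᵥ (A⁻¹ *ᵥ b)) := by
    rw [← replicateRow_vecMul, ← replicateRow_vecMul, vecMul_transpose, ← mulVec_transpose,
      hAs.inv.eq]
    rfl
  have hcol : replicateCol Unit r - P * A⁻¹ * replicateCol Unit b =
      replicateCol Unit (r - P *ᵥ (A⁻¹ *ᵥ b)) := by
    rw [Matrix.mul_assoc, ← replicateCol_mulVec, ← replicateCol_mulVec]
    rfl
  rw [hrow, hcol]
  ext i j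
  simp [mul_apply, vecMulVec_apply]
  ring

end Field

end Matrix

theorem stmt14_general {n s : ℕ}
    (H₀ : Matrix (Fin n) (Fin n) ℝ)
    (γb γ : ℝ) (hγ : 0 < γ)
    (Q : Matrix (Fin n) (Fin s) ℝ)
    (M : Matrix (Fin s) (Fin s) ℝ) (hMsymm : M.IsSymm) (hM : IsUnit M)
    (H : Matrix (Fin n) (Fin n) ℝ) (hH : H = γb • H₀ + Q * M⁻¹ * Qᵀ)
    (d y : Fin n → ℝ)
    (q : Fin n → ℝ) (hq : q = y - (γ * γb) • (H₀ *ᵥ d))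
    (δ : ℝ) (hδ_def : δ = q ⬝ᵥ d - γ * ((Qᵀ *ᵥ d) ⬝ᵥ (M⁻¹ *ᵥ (Qᵀ *ᵥ d))))
    (hδ : δ ≠ 0)
    (Mplus : Matrix (Fin s ⊕ Unit) (Fin s ⊕ Unit) ℝ)
    (hMplus : Mplus = fromBlocks (γ⁻¹ • M) (replicateCol Unit (Qᵀ *ᵥ d)) (replicateRow Unit (Qᵀ *ᵥ d))
      (of fun _ _ => q ⬝ᵥ d))
    (Qplus : Matrix (Fin n) (Fin s ⊕ Unit) ℝ)
    (hQplus : Qplus = of fun i j => Sum.elim (Q i) (fun _ => q i) j)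
    (Hplus : Matrix (Fin n) (Fin n) ℝ)
    (hHplus : Hplus = γ • (H + (γ * ((y - γ • (H *ᵥ d)) ⬝ᵥ d))⁻¹ •
      vecMulVec (y - γ • (H *ᵥ d)) (y - γ • (H *ᵥ d)))) :
    (y - γ • (H *ᵥ d)) ⬝ᵥ d = δ ∧
    IsUnit Mplus ∧
    Hplus = (γ * γb) • H₀ + Qplus * Mplus⁻¹ * Qplusᵀ := by
  set u := Qᵀ *ᵥ d
  have hA : (γ⁻¹ • M) * (γ • M⁻¹) = 1 := by
    rw [Matrix.smul_mul, Matrix.mul_smul, smul_smul, inv_mul_cancel₀ hγ.ne', one_smul,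
      mul_nonsing_inv M ((isUnit_iff_isUnit_det M).mp hM)]
  have hAinv : (γ⁻¹ • M)⁻¹ = γ • M⁻¹ := inv_eq_right_inv hA
  have hw : y - γ • (H *ᵥ d) = q - Q *ᵥ ((γ⁻¹ • M)⁻¹ *ᵥ u) := by
    rw [hAinv, hH, hq, add_mulVec, smul_mulVec, ← mulVec_mulVec, ← mulVec_mulVec, smul_mulVec,
      mulVec_smul]
    module
  have hσ : q ⬝ᵥ d - u ⬝ᵥ ((γ⁻¹ • M)⁻¹ *ᵥ u) = δ := by
    rw [hAinv, hδ_def, smul_mulVec, dotProduct_smul, smul_eq_mul]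
  have hwd : (y - γ • (H *ᵥ d)) ⬝ᵥ d = δ := by
    rw [hw, ← hσ, sub_dotProduct, dotProduct_comm (Q *ᵥ _) d, dotProduct_mulVec,
      ← mulVec_transpose]
  have hAunit : IsUnit (γ⁻¹ • M) := (isUnit_iff_isUnit_det _).mpr (isUnit_det_of_right_inverse hA)
  have hAsymm : (γ⁻¹ • M).IsSymm := hMsymm.smul γ⁻¹
  have hσ0 : q ⬝ᵥ d - u ⬝ᵥ ((γ⁻¹ • M)⁻¹ *ᵥ u) ≠ 0 := hσ ▸ hδ
  refine ⟨hwd, hMplus ▸ isUnit_fromBlocks_replicateCol_replicateRow hAunit hσ0, ?_⟩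
  have hQplus' : Qplus = fromCols Q (replicateCol Unit q) := hQplus
  rw [hHplus, hMplus, hQplus',
    fromCols_replicateCol_mul_inv_fromBlocks_mul_transpose hAunit hAsymm hσ0, hσ, ← hw, hwd,
    hAinv, hH, Matrix.mul_smul, Matrix.smul_mul]
  match_scalars <;> field_simp

theorem stmt14 {n s : ℕ}
    (H₀ : Matrix (Fin n) (Fin n) ℝ) (hH₀ : H₀.IsSymm)
    (γb γ : ℝ) (hγb : 0 < γb) (hγ : 0 < γ)
    (Q : Matrix (Fin n) (Fin s) ℝ)
    (M : Matrix (Fin s) (Fin s) ℝ) (hMsymm : M.IsSymm) (hM : IsUnit M)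
    (H : Matrix (Fin n) (Fin n) ℝ) (hH : H = γb • H₀ + Q * M⁻¹ * Qᵀ)
    (d y : Fin n → ℝ)
    (q : Fin n → ℝ) (hq : q = y - (γ * γb) • (H₀ *ᵥ d))
    (δ : ℝ) (hδ_def : δ = q ⬝ᵥ d - γ * ((Qᵀ *ᵥ d) ⬝ᵥ (M⁻¹ *ᵥ (Qᵀ *ᵥ d))))
    (hδ : δ ≠ 0)
    (Mplus : Matrix (Fin s ⊕ Unit) (Fin s ⊕ Unit) ℝ)
    (hMplus : Mplus = fromBlocks (γ⁻¹ • M) (replicateCol Unit (Qᵀ *ᵥ d)) (replicateRow Unit (Qᵀ *ᵥ d))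
      (of fun _ _ => q ⬝ᵥ d))
    (Qplus : Matrix (Fin n) (Fin s ⊕ Unit) ℝ)
    (hQplus : Qplus = of fun i j => Sum.elim (Q i) (fun _ => q i) j)
    (Hplus : Matrix (Fin n) (Fin n) ℝ)
    (hHplus : Hplus = γ • (H + (γ * ((y - γ • (H *ᵥ d)) ⬝ᵥ d))⁻¹ •
      vecMulVec (y - γ • (H *ᵥ d)) (y - γ • (H *ᵥ d)))) :
    (y - γ • (H *ᵥ d)) ⬝ᵥ d = δ ∧
    IsUnit Mplus ∧
    Hplus = (γ * γb) • H₀ + Qplus * Mplus⁻¹ * Qplusᵀ :=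
  stmt14_general H₀ γb γ hγ Q M hMsymm hM H hH d y q hq δ hδ_def hδ Mplus hMplus Qplus hQplus Hplus
    hHplus
end
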